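/- Define the IFEBM update map Φ as follows. Given symmetric positive definite real 3×3 matrices C and Cᵢ with det Cᵢ = 1 and given λ ≥ 0, ε ≥ 0, set C̄ := (det C)^{-1/3}·C, let A := C̄^{-1/2}·(Cᵢ + λ·C̄)·C̄^{-1/2} (using the positive definite square root C̄^{1/2} of C̄), φ₀ := (det A)^{1/3}, φ := φ₀ − (tr A/(3φ₀))·ε, X := 2·A·(sqrt(φ²·I + 4ε·A) + φ·I)⁻¹, and Φ(C, Cᵢ) := (det(C^{1/2}·X·C^{1/2}))^{-1/3}·C^{1/2}·X·C^{1/2}. Then for every invertible real 3×3 matrix F₀ with det F₀ = 1, Φ(F₀⁻ᵀ·C·F₀⁻¹, F₀⁻ᵀ·Cᵢ·F₀⁻¹) = F₀⁻ᵀ·Φ(C, Cᵢ)·F₀⁻¹. That is, the iteration-free Euler backward method exactly preserves w-invariance under volume-preserving changes of the reference configuration. -/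

import Mathlib

open Matrix

abbrev Mat := Matrix (Fin 3) (Fin 3) ℝ

/-- The unimodular part of a matrix. -/
noncomputable def unimod (M : Mat) : Mat := (M.det ^ (-(1 : ℝ) / 3)) • M

/-- The unique positive semidefinite square root of a positive semidefinite matrix
(junk value `0` on matrices that are not positive semidefinite). -/
noncomputable def msqrt (M : Mat) : Mat := by
  classical exact if h : M.PosSemidef then
    h.1.eigenvectorUnitary.1 * diagonal ((↑) ∘ (√·) ∘ h.1.eigenvalues) *
      (star h.1.eigenvectorUnitary : Mat) else 0

/-- The IFEBM update map `Φ`: given the step parameters `λ = Δt·c₁₀/η`, `ε = Δt·c₀₁/η`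
and the inputs `C`, `Cᵢ`, it produces the updated internal variable. -/
noncomputable def ifebmUpdate (lam eps : ℝ) (C Ci : Mat) : Mat :=
  let Cb : Mat := unimod C
  let A : Mat := (msqrt Cb)⁻¹ * (Ci + lam • Cb) * (msqrt Cb)⁻¹
  let φ0 : ℝ := A.det ^ ((1 : ℝ) / 3)
  let φ : ℝ := φ0 - A.trace / (3 * φ0) * eps
  let X : Mat := (2 : ℝ) • A * (msqrt (φ ^ 2 • (1 : Mat) + (4 * eps) • A) + φ • (1 : Mat))⁻¹
  unimod (msqrt C * X * msqrt C)


/-!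
Write `S = C^{1/2}` and `S' = (Pᵀ C P)^{1/2}` for the reference change `P = F₀⁻¹`. Since
`S'² = Pᵀ S² P`, the matrix `Q = S'⁻¹ Pᵀ S` is orthogonal, and it does not change when `C` is
replaced by its unimodular part. Hence `A` is transformed into `Q A Qᵀ`; `det A` and `tr A`, thus
`φ`, are unchanged, and the matrix square root commutes with orthogonal conjugation, so `X` becomes
`Q X Qᵀ`. Finally `S' Q X Qᵀ S' = Pᵀ S X S P`, and `unimod` commutes with congruence by a
unimodular `P`.
-/

section MatrixSqrt

open scoped MatrixOrder

variable {M S : Mat}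

lemma msqrt_eq_cfcSqrt (hM : M.PosSemidef) : msqrt M = CFC.sqrt M := by
  rw [CFC.sqrt_eq_cfc, cfc_nnreal_eq_real _ M hM.nonneg, hM.1.cfc_eq]
  simp only [msqrt, dif_pos hM, IsHermitian.cfc, Unitary.conjStarAlgAut_apply]
  congr 3
  funext i
  simp [hM.eigenvalues_nonneg i]

lemma msqrt_of_not_posSemidef (hM : ¬M.PosSemidef) : msqrt M = 0 := dif_neg hM

lemma posSemidef_msqrt (hM : M.PosSemidef) : (msqrt M).PosSemidef := by
  rw [msqrt_eq_cfcSqrt hM]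
  exact (CFC.sqrt_nonneg M).posSemidef

lemma msqrt_mul_msqrt (hM : M.PosSemidef) : msqrt M * msqrt M = M := by
  rw [msqrt_eq_cfcSqrt hM]
  exact CFC.sqrt_mul_sqrt_self M hM.nonneg

lemma eq_msqrt_of_mul_self_eq (hS : S.PosSemidef) (h : S * S = M) : S = msqrt M := by
  have hM : M.PosSemidef := by
    rw [← h]
    convert posSemidef_conjTranspose_mul_self S
    exact hS.1.eq.symm
  rw [msqrt_eq_cfcSqrt hM]
  exact (CFC.sqrt_unique h hS.nonneg).symm

lemma transpose_msqrt (M : Mat) : (msqrt M)ᵀ = msqrt M := by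
  by_cases hM : M.PosSemidef
  · simpa [conjTranspose_eq_transpose_of_trivial] using (posSemidef_msqrt hM).1.eq
  · simp [msqrt_of_not_posSemidef hM]

lemma isUnit_det_msqrt (hM : M.PosDef) : IsUnit (msqrt M).det := by
  have hdet : (msqrt M).det * (msqrt M).det = M.det := by
    rw [← det_mul, msqrt_mul_msqrt hM.posSemidef]
  refine isUnit_iff_ne_zero.mpr fun h0 ↦ ?_
  rw [h0, mul_zero] at hdet
  exact hM.det_pos.ne hdet

lemma msqrt_smul (hM : M.PosSemidef) {c : ℝ} (hc : 0 ≤ c) : msqrt (c • M) = √c • msqrt M := by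
  refine (eq_msqrt_of_mul_self_eq ((posSemidef_msqrt hM).smul (Real.sqrt_nonneg c)) ?_).symm
  rw [smul_mul_smul_comm, Real.mul_self_sqrt hc, msqrt_mul_msqrt hM]

end MatrixSqrt

section OrthogonalConj

variable {Q : Mat}

lemma orthogonal_conj_smul_one (hQ : Q ∈ orthogonalGroup (Fin 3) ℝ) (c : ℝ) :
    Q * (c • 1) * Qᵀ = c • 1 := by
  rw [Matrix.mul_smul, Matrix.smul_mul, Matrix.mul_one, (mem_orthogonalGroup_iff _ _).mp hQ]

lemma transpose_mul_orthogonal_conj (hQ : Q ∈ orthogonalGroup (Fin 3) ℝ) (M : Mat) :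
    Qᵀ * (Q * M * Qᵀ) * Q = M := by
  simp only [← Matrix.mul_assoc, (mem_orthogonalGroup_iff' _ _).mp hQ, Matrix.one_mul]
  rw [Matrix.mul_assoc, (mem_orthogonalGroup_iff' _ _).mp hQ, Matrix.mul_one]

lemma det_orthogonal_conj (hQ : Q ∈ orthogonalGroup (Fin 3) ℝ) (M : Mat) :
    (Q * M * Qᵀ).det = M.det := by
  rw [det_mul, det_mul, mul_right_comm, ← det_mul, (mem_orthogonalGroup_iff _ _).mp hQ, det_one,
    one_mul]

lemma trace_orthogonal_conj (hQ : Q ∈ orthogonalGroup (Fin 3) ℝ) (M : Mat) :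
    (Q * M * Qᵀ).trace = M.trace := by
  rw [trace_mul_comm, ← Matrix.mul_assoc, (mem_orthogonalGroup_iff' _ _).mp hQ, Matrix.one_mul]

lemma inv_orthogonal_conj (hQ : Q ∈ orthogonalGroup (Fin 3) ℝ) (M : Mat) :
    (Q * M * Qᵀ)⁻¹ = Q * M⁻¹ * Qᵀ := by
  rw [Matrix.mul_inv_rev, Matrix.mul_inv_rev,
    inv_eq_right_inv ((mem_orthogonalGroup_iff' _ _).mp hQ), inv_eq_right_inv ((mem_orthogonalGroup_iff _ _).mp hQ), Matrix.mul_assoc]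

lemma msqrt_orthogonal_conj (hQ : Q ∈ orthogonalGroup (Fin 3) ℝ) (M : Mat) :
    msqrt (Q * M * Qᵀ) = Q * msqrt M * Qᵀ := by
  by_cases hM : M.PosSemidef
  · refine (eq_msqrt_of_mul_self_eq ?_ ?_).symm
    · simpa using (posSemidef_msqrt hM).conjTranspose_mul_mul_same Qᵀ
    · calc Q * msqrt M * Qᵀ * (Q * msqrt M * Qᵀ) = Q * (msqrt M * (Qᵀ * Q) * msqrt M) * Qᵀ := by
            simp only [Matrix.mul_assoc]
        _ = Q * M * Qᵀ := by
            rw [(mem_orthogonalGroup_iff' _ _).mp hQ, Matrix.mul_one, msqrt_mul_msqrt hM]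
  · have hQM : ¬(Q * M * Qᵀ).PosSemidef := fun h ↦ hM <| by
      simpa [transpose_mul_orthogonal_conj hQ] using h.conjTranspose_mul_mul_same Q
    rw [msqrt_of_not_posSemidef hM, msqrt_of_not_posSemidef hQM, Matrix.mul_zero, Matrix.zero_mul]

end OrthogonalConj

section PolarRotation

variable {M P : Mat}

lemma posDef_transpose_mul_mul (hM : M.PosDef) (hP : IsUnit P) : (Pᵀ * M * P).PosDef := by
  simpa [conjTranspose_eq_transpose_of_trivial] using
    hM.conjTranspose_mul_mul_same (mulVec_injective_iff_isUnit.mpr hP)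

noncomputable def polarRotation (M P : Mat) : Mat := (msqrt (Pᵀ * M * P))⁻¹ * Pᵀ * msqrt M

lemma msqrt_mul_polarRotation (hM : M.PosDef) (hP : IsUnit P) :
    msqrt (Pᵀ * M * P) * polarRotation M P = Pᵀ * msqrt M := by
  have hS' := isUnit_det_msqrt (posDef_transpose_mul_mul hM hP)
  rw [polarRotation, Matrix.mul_assoc (msqrt (Pᵀ * M * P))⁻¹, mul_nonsing_inv_cancel_left _ _ hS']

lemma polarRotation_mul_inv_msqrt (hM : M.PosDef) :
    polarRotation M P * (msqrt M)⁻¹ = (msqrt (Pᵀ * M * P))⁻¹ * Pᵀ :=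
  mul_nonsing_inv_cancel_right _ _ (isUnit_det_msqrt hM)

lemma polarRotation_mem_orthogonalGroup (hM : M.PosDef) (hP : IsUnit P) :
    polarRotation M P ∈ orthogonalGroup (Fin 3) ℝ := by
  set S' := msqrt (Pᵀ * M * P)
  have hS' := isUnit_det_msqrt (posDef_transpose_mul_mul hM hP)
  rw [mem_orthogonalGroup_iff]
  calc polarRotation M P * (polarRotation M P)ᵀ = S'⁻¹ * (Pᵀ * (msqrt M * msqrt M) * P) * S'⁻¹ := by
        simp only [polarRotation, S', transpose_mul, transpose_transpose, transpose_nonsing_inv,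
          transpose_msqrt, Matrix.mul_assoc]
    _ = S'⁻¹ * (S' * S') * S'⁻¹ := by
        rw [msqrt_mul_msqrt hM.posSemidef,
          msqrt_mul_msqrt (posDef_transpose_mul_mul hM hP).posSemidef]
    _ = 1 := by
        rw [← Matrix.mul_assoc, nonsing_inv_mul _ hS', Matrix.one_mul, mul_nonsing_inv _ hS']

lemma polarRotation_smul (hM : M.PosDef) (hP : IsUnit P) {c : ℝ} (hc : 0 < c) :
    polarRotation (c • M) P = polarRotation M P := by
  set S' := msqrt (Pᵀ * M * P)
  have hS' := isUnit_det_msqrt (posDef_transpose_mul_mul hM hP)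
  have hsqrt : √c ≠ 0 := (Real.sqrt_pos.mpr hc).ne'
  have hinv : (√c • S')⁻¹ = (√c)⁻¹ • S'⁻¹ :=
    inv_eq_left_inv (by rw [smul_mul_smul_comm, inv_mul_cancel₀ hsqrt, nonsing_inv_mul _ hS',
      one_smul])
  rw [polarRotation, polarRotation, Matrix.mul_smul, Matrix.smul_mul,
    msqrt_smul (posDef_transpose_mul_mul hM hP).posSemidef hc.le, msqrt_smul hM.posSemidef hc.le,
    hinv, Matrix.smul_mul, Matrix.mul_smul, Matrix.smul_mul, smul_smul, mul_inv_cancel₀ hsqrt,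
    one_smul]

lemma polarRotation_conj_inv_msqrt (hM : M.PosDef) (N : Mat) :
    polarRotation M P * ((msqrt M)⁻¹ * N * (msqrt M)⁻¹) * (polarRotation M P)ᵀ =
      (msqrt (Pᵀ * M * P))⁻¹ * (Pᵀ * N * P) * (msqrt (Pᵀ * M * P))⁻¹ := by
  have h := polarRotation_mul_inv_msqrt (P := P) hM
  have ht := congrArg transpose h
  simp only [transpose_mul, transpose_nonsing_inv, transpose_msqrt, transpose_transpose] at ht
  calc _ = polarRotation M P * (msqrt M)⁻¹ * N * ((msqrt M)⁻¹ * (polarRotation M P)ᵀ) := by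
        simp only [Matrix.mul_assoc]
    _ = _ := by
        rw [h, ht]
        simp only [Matrix.mul_assoc]

lemma msqrt_mul_polarRotation_conj (hM : M.PosDef) (hP : IsUnit P) (X : Mat) :
    msqrt (Pᵀ * M * P) * (polarRotation M P * X * (polarRotation M P)ᵀ) * msqrt (Pᵀ * M * P) =
      Pᵀ * (msqrt M * X * msqrt M) * P := by
  have h := msqrt_mul_polarRotation hM hP
  have ht := congrArg transpose h
  simp only [transpose_mul, transpose_msqrt, transpose_transpose] at ht
  calc _ = msqrt (Pᵀ * M * P) * polarRotation M P * X *
        ((polarRotation M P)ᵀ * msqrt (Pᵀ * M * P)) := by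
        simp only [Matrix.mul_assoc]
    _ = _ := by
        rw [h, ht]
        simp only [Matrix.mul_assoc]

end PolarRotation

lemma posDef_unimod {M : Mat} (hM : M.PosDef) : (unimod M).PosDef :=
  hM.smul (Real.rpow_pos_of_pos hM.det_pos _)

lemma unimod_transpose_mul_mul {P : Mat} (hP : P.det = 1) (M : Mat) :
    unimod (Pᵀ * M * P) = Pᵀ * unimod M * P := by
  rw [unimod, unimod, det_mul, det_mul, det_transpose, hP, one_mul, mul_one, Matrix.mul_smul,
    Matrix.smul_mul]

lemma polarRotation_unimod {M P : Mat} (hM : M.PosDef) (hP : IsUnit P) :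
    polarRotation (unimod M) P = polarRotation M P :=
  polarRotation_smul hM hP (Real.rpow_pos_of_pos hM.det_pos _)

noncomputable def ifebmA (lam : ℝ) (C Ci : Mat) : Mat :=
  (msqrt (unimod C))⁻¹ * (Ci + lam • unimod C) * (msqrt (unimod C))⁻¹

noncomputable def ifebmX (eps : ℝ) (A : Mat) : Mat :=
  let φ0 : ℝ := A.det ^ ((1 : ℝ) / 3)
  let φ : ℝ := φ0 - A.trace / (3 * φ0) * eps
  (2 : ℝ) • A * (msqrt (φ ^ 2 • (1 : Mat) + (4 * eps) • A) + φ • (1 : Mat))⁻¹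

lemma ifebmUpdate_eq (lam eps : ℝ) (C Ci : Mat) :
    ifebmUpdate lam eps C Ci = unimod (msqrt C * ifebmX eps (ifebmA lam C Ci) * msqrt C) :=
  rfl

lemma ifebmX_orthogonal_conj {Q : Mat} (hQ : Q ∈ orthogonalGroup (Fin 3) ℝ) (eps : ℝ) (A : Mat) :
    ifebmX eps (Q * A * Qᵀ) = Q * ifebmX eps A * Qᵀ := by
  have hcancel : ∀ B : Mat, Qᵀ * (Q * B) = B := fun B ↦ by
    rw [← Matrix.mul_assoc, (mem_orthogonalGroup_iff' _ _).mp hQ, Matrix.one_mul]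
  have hshift : ∀ c d : ℝ, c • (1 : Mat) + d • (Q * A * Qᵀ) = Q * (c • 1 + d • A) * Qᵀ :=
    fun c d ↦ by
      rw [Matrix.mul_add, Matrix.add_mul, orthogonal_conj_smul_one hQ, Matrix.mul_smul,
        Matrix.smul_mul]
  suffices h : ∀ φ : ℝ,
      (2 : ℝ) • (Q * A * Qᵀ) * (msqrt (φ ^ 2 • 1 + (4 * eps) • (Q * A * Qᵀ)) + φ • 1)⁻¹ =
        Q * ((2 : ℝ) • A * (msqrt (φ ^ 2 • 1 + (4 * eps) • A) + φ • 1)⁻¹) * Qᵀ by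
    simp only [ifebmX, det_orthogonal_conj hQ, trace_orthogonal_conj hQ]
    exact h _
  intro φ
  conv_lhs => rw [hshift, msqrt_orthogonal_conj hQ, ← orthogonal_conj_smul_one hQ φ,
    ← Matrix.add_mul, ← Matrix.mul_add, inv_orthogonal_conj hQ]
  simp only [Matrix.smul_mul, Matrix.mul_smul, Matrix.mul_assoc, hcancel]

lemma ifebmA_transpose_mul_mul {C P : Mat} (hC : C.PosDef) (hP : P.det = 1) (lam : ℝ) (Ci : Mat) :
    ifebmA lam (Pᵀ * C * P) (Pᵀ * Ci * P) =
      polarRotation C P * ifebmA lam C Ci * (polarRotation C P)ᵀ := by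
  have hPu : IsUnit P := (isUnit_iff_isUnit_det _).mpr (hP ▸ isUnit_one)
  rw [ifebmA, ifebmA, ← polarRotation_unimod hC hPu,
    polarRotation_conj_inv_msqrt (posDef_unimod hC), unimod_transpose_mul_mul hP]
  simp only [Matrix.mul_add, Matrix.add_mul, Matrix.mul_smul, Matrix.smul_mul]

lemma ifebmUpdate_transpose_mul_mul {C P : Mat} (hC : C.PosDef) (hP : P.det = 1)
    (lam eps : ℝ) (Ci : Mat) :
    ifebmUpdate lam eps (Pᵀ * C * P) (Pᵀ * Ci * P) = Pᵀ * ifebmUpdate lam eps C Ci * P := by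
  have hPu : IsUnit P := (isUnit_iff_isUnit_det _).mpr (hP ▸ isUnit_one)
  rw [ifebmUpdate_eq, ifebmUpdate_eq, ifebmA_transpose_mul_mul hC hP,
    ifebmX_orthogonal_conj (polarRotation_mem_orthogonalGroup hC hPu),
    msqrt_mul_polarRotation_conj hC hPu, unimod_transpose_mul_mul hP]

theorem ifebm_w_invariance (C Ci : Mat) (hC : C.PosDef) (lam eps : ℝ) (F0 : Mat)
    (hdetF0 : F0.det = 1) :
    ifebmUpdate lam eps ((F0⁻¹)ᵀ * C * F0⁻¹) ((F0⁻¹)ᵀ * Ci * F0⁻¹) =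
      (F0⁻¹)ᵀ * ifebmUpdate lam eps C Ci * F0⁻¹ :=
  ifebmUpdate_transpose_mul_mul hC (by rw [det_nonsing_inv, hdetF0, Ring.inverse_one]) lam eps Ci
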